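/- arXiv:1706.10186 — 9 statements merged into one kernel-verified Lean document; each statement's English description precedes it below -/
import Mathlib

section
/- For measurable functions f, g : ℝ → ℝ bounded from below, t ∈ [0,1], and λ', λ'' ≥ 0, setting λ = t·λ' + (1−t)·λ'', one has the pointwise inequality (tf+(1−t)g)^{λc}(x) ≤ t f^{λ' c}(x) + (1−t) g^{λ'' c}(x) for all x. -/
open MeasureTheory Set Filter Topology ENNReal

private lemma key_term (a b t l1 l2 : ℝ) (ht0 : 0 ≤ t) (ht1 : t ≤ 1)
    (hl1 : 0 ≤ l1) (hl2 : 0 ≤ l2) (k : ℝ≥0∞) :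
    ((t * a + (1 - t) * b : ℝ) : EReal) - ((t * l1 + (1 - t) * l2 : ℝ) : EReal) * (k : EReal)
      ≤ (t : EReal) * ((a : EReal) - (l1 : EReal) * (k : EReal))
        + ((1 - t : ℝ) : EReal) * ((b : EReal) - (l2 : EReal) * (k : EReal)) := by
  by_cases hk : k = ⊤
  · subst hk
    rw [EReal.coe_ennreal_top]
    rcases lt_or_eq_of_le (add_nonneg (mul_nonneg ht0 hl1) (mul_nonneg (by linarith) hl2) : (0:ℝ) ≤ t * l1 + (1 - t) * l2) with hpos | hzero
    · rw [EReal.coe_mul_top_of_pos hpos]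
      have : ((t * a + (1 - t) * b : ℝ) : EReal) - ⊤ = ⊥ := by
        rw [sub_eq_add_neg, EReal.neg_top, EReal.add_bot]
      rw [this]; exact bot_le
    · have h1 : t * l1 = 0 := by nlinarith [mul_nonneg ht0 hl1, mul_nonneg (by linarith : (0:ℝ) ≤ 1 - t) hl2]
      have h2 : (1 - t) * l2 = 0 := by nlinarith [mul_nonneg ht0 hl1, mul_nonneg (by linarith : (0:ℝ) ≤ 1 - t) hl2]
      have hL : ((t * l1 + (1 - t) * l2 : ℝ) : EReal) = 0 := by
        rw [h1, h2]; norm_num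
      rw [hL, zero_mul, sub_zero]
      have e1 : (t : EReal) * ((a : EReal) - (l1 : EReal) * ⊤) = ((t * a : ℝ) : EReal) := by
        rcases mul_eq_zero.mp h1 with h | h
        · rw [h]; norm_num
        · rw [h]; norm_num
      have e2 : ((1 - t : ℝ) : EReal) * ((b : EReal) - (l2 : EReal) * ⊤) = (((1 - t) * b : ℝ) : EReal) := by
        rcases mul_eq_zero.mp h2 with h | h
        · rw [h]; norm_num
        · rw [h]; norm_num
      rw [e1, e2, ← EReal.coe_add]
  · have : (k : EReal) = ((k.toReal : ℝ) : EReal) := by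
      rw [← EReal.toReal_coe_ennreal]
      exact (EReal.coe_toReal (by simpa using hk) (by simp)).symm
    rw [this]
    apply le_of_eq
    norm_cast
    ring

/-- convexity of the `λc`-transform:
`(t·f + (1−t)·g)^{λc}(x) ≤ t·f^{λ'c}(x) + (1−t)·g^{λ''c}(x)` with `λ = tλ' + (1−t)λ''`. -/
theorem lambda_c_transform_convex (f g : ℝ → ℝ) (hf : Measurable f) (hg : Measurable g)
    (hfb : ∃ B : ℝ, ∀ x, B ≤ f x) (hgb : ∃ B : ℝ, ∀ x, B ≤ g x)
    (t : ℝ) (ht : t ∈ Set.Icc (0 : ℝ) 1)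
    (lam' lam'' : ℝ) (hlam' : 0 ≤ lam') (hlam'' : 0 ≤ lam'')
    (c : ℝ → ℝ → ℝ≥0∞) (x : ℝ) :
    (⨆ y : ℝ, (((t * f y + (1 - t) * g y : ℝ) : EReal)
        - ((t * lam' + (1 - t) * lam'' : ℝ) : EReal) * (c x y : EReal)))
      ≤ (t : EReal) * (⨆ y : ℝ, ((f y : EReal) - (lam' : EReal) * (c x y : EReal)))
        + ((1 - t : ℝ) : EReal) * (⨆ y : ℝ, ((g y : EReal) - (lam'' : EReal) * (c x y : EReal))) := by
  obtain ⟨ht0, ht1⟩ := ht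
  refine iSup_le fun y => ?_
  calc ((t * f y + (1 - t) * g y : ℝ) : EReal)
        - ((t * lam' + (1 - t) * lam'' : ℝ) : EReal) * (c x y : EReal)
      ≤ (t : EReal) * ((f y : EReal) - (lam' : EReal) * (c x y : EReal))
        + ((1 - t : ℝ) : EReal) * ((g y : EReal) - (lam'' : EReal) * (c x y : EReal)) :=
        key_term (f y) (g y) t lam' lam'' ht0 ht1 hlam' hlam'' (c x y)
    _ ≤ _ := by
        gcongr ?_ + ?_
        · exact mul_le_mul_of_nonneg_left (le_iSup (fun y => (f y : EReal) - (lam' : EReal) * (c x y : EReal)) y) (by exact_mod_cast ht0)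
        · exact mul_le_mul_of_nonneg_left (le_iSup (fun y => (g y : EReal) - (lam'' : EReal) * (c x y : EReal)) y) (by exact_mod_cast (by linarith : (0:ℝ) ≤ 1 - t))
end

section
/- For the loss function l(x) = x⁺/α with α ∈ (0,1) and quadratic cost c(x,y) = (x−y)², for every λ > 0 the λc-transform satisfies sup_y ( y⁺/α − λ(x−y)² ) = (1/α)·( x + 1/(4λα) )⁺ for all x ∈ ℝ. -/
open MeasureTheory Set Filter Topology

lemma avar_quad_key (α lam : ℝ) (hα0 : 0 < α) (hlam : 0 < lam) (x : ℝ) :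
    (⨆ y : ℝ, ((max y 0 / α - lam * (x - y) ^ 2 : ℝ) : EReal))
      = ((1 / α * max (x + 1 / (4 * lam * α)) 0 : ℝ) : EReal) := by
  have hla : 0 < lam * α := mul_pos hlam hα0
  apply le_antisymm
  · apply iSup_le
    intro y
    rw [EReal.coe_le_coe_iff]
    have hmaxge : max (x + 1 / (4 * lam * α)) 0 ≥ x + 1 / (4 * lam * α) := le_max_left _ _
    have hmaxge0 : max (x + 1 / (4 * lam * α)) 0 ≥ 0 := le_max_right _ _
    rcases le_or_gt y 0 with hy | hy
    · rw [max_eq_right hy]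
      have h1 : (0:ℝ) ≤ lam * (x - y) ^ 2 := by positivity
      have h2 : (0:ℝ) ≤ 1 / α * max (x + 1 / (4 * lam * α)) 0 :=
        mul_nonneg (by positivity) hmaxge0
      simp only [zero_div]
      linarith
    · rw [max_eq_left hy.le]
      have key : y / α - lam * (x - y) ^ 2 ≤ 1 / α * (x + 1 / (4 * lam * α)) := by
        rw [sub_le_iff_le_add, div_le_iff₀ hα0]
        have expand : (1 / α * (x + 1 / (4 * lam * α)) + lam * (x - y) ^ 2) * α
            = x + 1 / (4 * lam * α) + lam * α * (x - y) ^ 2 := by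
          field_simp
        rw [expand]
        have h3 : (0:ℝ) ≤ (2 * lam * α * (y - x) - 1) ^ 2 := sq_nonneg _
        have h4 : 1 / (4 * lam * α) * (4 * lam * α) = 1 := by field_simp
        nlinarith [mul_pos hla hla]
      have : 1 / α * (x + 1 / (4 * lam * α)) ≤ 1 / α * max (x + 1 / (4 * lam * α)) 0 := by
        apply mul_le_mul_of_nonneg_left hmaxge (by positivity)
      linarith
  · rcases le_or_gt (x + 1 / (4 * lam * α)) 0 with h | h
    · apply le_iSup_of_le x
      rw [EReal.coe_le_coe_iff, max_eq_right h]
      have hx0 : x ≤ 0 := by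
        have : 0 < 1 / (4 * lam * α) := by positivity
        linarith
      rw [max_eq_right hx0]
      simp
    · apply le_iSup_of_le (x + 1 / (2 * lam * α))
      rw [EReal.coe_le_coe_iff, max_eq_left h.le]
      have hy0 : 0 ≤ x + 1 / (2 * lam * α) := by
        have h1 : 1 / (4 * lam * α) ≤ 1 / (2 * lam * α) := by
          apply div_le_div_of_nonneg_left (by norm_num) (by linarith) (by linarith)
        linarith
      rw [max_eq_left hy0]
      have : x - (x + 1 / (2 * lam * α)) = -(1 / (2 * lam * α)) := by ring
      rw [this, le_sub_iff_add_le]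
      have heq : 1 / α * (x + 1 / (4 * lam * α)) + lam * (-(1 / (2 * lam * α))) ^ 2
          = (x + 1 / (2 * lam * α)) / α := by
        field_simp; ring
      rw [heq]

/-- for `l(x) = x⁺/α`, `α ∈ (0,1)`, quadratic cost `c(x,y) = (x−y)²` and `λ > 0`:
`sup_y ( y⁺/α − λ(x−y)² ) = (1/α)(x + 1/(4λα))⁺`, both for `x ≤ 0` and for all `x ∈ ℝ`. -/
theorem lambda_c_transform_avar_quadratic (α : ℝ) (hα : α ∈ Set.Ioo (0 : ℝ) 1)
    (lam : ℝ) (hlam : 0 < lam) :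
    (∀ x : ℝ, x ≤ 0 →
      (⨆ y : ℝ, ((max y 0 / α - lam * (x - y) ^ 2 : ℝ) : EReal))
        = ((1 / α * max (x + 1 / (4 * lam * α)) 0 : ℝ) : EReal)) ∧
    (∀ x : ℝ,
      (⨆ y : ℝ, ((max y 0 / α - lam * (x - y) ^ 2 : ℝ) : EReal))
        = ((1 / α * max (x + 1 / (4 * lam * α)) 0 : ℝ) : EReal)) := by
  exact ⟨fun x _ => avar_quad_key α lam hα.1 hlam x, fun x => avar_quad_key α lam hα.1 hlam x⟩
end

section
/- For the loss function l(x) = x⁺/α with α ∈ (0,1) and cost c(x,y) = |x−y|: if 0 ≤ λ < 1/α then sup_y ( y⁺/α − λ|x−y| ) = ∞ for every x, and if λ ≥ 1/α then sup_y ( y⁺/α − λ|x−y| ) = x⁺/α for every x. -/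
open MeasureTheory Set Filter Topology

/-! For `λ < 1/α` the objective grows like `(1/α - λ) y` as `y → ∞`. For `λ ≥ 1/α` the map
`y ↦ y⁺/α` is `λ`-Lipschitz, so the objective never exceeds its value `x⁺/α` at `y = x`. -/

lemma EReal.iSup_coe_eq_top_of_tendsto_atTop {ι : Type*} {l : Filter ι} [l.NeBot] {g : ι → ℝ}
    (hg : Tendsto g l atTop) : ⨆ i, (g i : EReal) = ⊤ := by
  refine EReal.eq_top_iff_forall_lt _ |>.mpr fun M => ?_
  obtain ⟨i, hi⟩ := (hg.eventually_gt_atTop M).exists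
  exact (EReal.coe_lt_coe_iff.mpr hi).trans_le (le_iSup (fun i => (g i : EReal)) i)

lemma EReal.iSup_coe_eq_of_forall_le {ι : Type*} {g : ι → ℝ} {i₀ : ι} (hg : ∀ i, g i ≤ g i₀) :
    ⨆ i, (g i : EReal) = g i₀ :=
  le_antisymm (iSup_le fun i => EReal.coe_le_coe_iff.mpr (hg i))
    (le_iSup (fun i => (g i : EReal)) i₀)

lemma tendsto_max_zero_div_sub_mul_abs_atTop {α lam : ℝ} (hα : 0 < α) (hlam : lam < 1 / α)
    (x : ℝ) : Tendsto (fun y => max y 0 / α - lam * |x - y|) atTop atTop := by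
  have hlin : Tendsto (fun y => (1 / α - lam) * y + lam * x) atTop atTop :=
    tendsto_atTop_add_const_right _ _ (tendsto_id.const_mul_atTop (sub_pos.mpr hlam))
  refine hlin.congr' ?_
  filter_upwards [eventually_ge_atTop (max x 0)] with y hy
  rw [max_eq_left ((le_max_right x 0).trans hy), abs_of_nonpos (by linarith [le_max_left x 0])]
  field_simp
  ring

lemma max_zero_div_sub_mul_abs_le {α lam : ℝ} (hα : 0 < α) (hlam : 1 / α ≤ lam) (x y : ℝ) :
    max y 0 / α - lam * |x - y| ≤ max x 0 / α := by
  have hlip : max y 0 - max x 0 ≤ |x - y| := by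
    simpa [abs_sub_comm] using (le_abs_self _).trans (abs_max_sub_max_le_abs y x 0)
  calc max y 0 / α - lam * |x - y| ≤ max y 0 / α - 1 / α * |x - y| := by
        gcongr
    _ ≤ max x 0 / α := by
        rw [div_sub' hα.ne', div_le_div_iff_of_pos_right hα]
        field_simp
        linarith

/-- for `l(x) = x⁺/α`, `α ∈ (0,1)` and cost `c(x,y) = |x−y|`: if `0 ≤ λ < 1/α`
then `sup_y (y⁺/α − λ|x−y|) = ∞` for every `x`, and if `λ ≥ 1/α` then it equals `x⁺/α`. -/
theorem lambda_c_transform_avar_linear (α : ℝ) (hα : α ∈ Set.Ioo (0 : ℝ) 1) (lam : ℝ) :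
    (0 ≤ lam → lam < 1 / α → ∀ x : ℝ,
      (⨆ y : ℝ, ((max y 0 / α - lam * |x - y| : ℝ) : EReal)) = (⊤ : EReal)) ∧
    (1 / α ≤ lam → ∀ x : ℝ,
      (⨆ y : ℝ, ((max y 0 / α - lam * |x - y| : ℝ) : EReal)) = ((max x 0 / α : ℝ) : EReal)) := by
  refine ⟨fun _ hlam x => ?_, fun hlam x => ?_⟩
  · exact EReal.iSup_coe_eq_top_of_tendsto_atTop
      (tendsto_max_zero_div_sub_mul_abs_atTop hα.1 hlam x)
  · have hmax := EReal.iSup_coe_eq_of_forall_le (i₀ := x)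
      fun y => (max_zero_div_sub_mul_abs_le hα.1 hlam x y).trans_eq (by simp)
    simpa using hmax
end

section
/- Let l(x) = ((max(1+x,0))² − 1)/2 and c(x,y) = (x−y)². Then for λ > 1/2 one has l^{λc}(x) := sup_y ( l(y) − λ(x−y)² ) = (2λ/(2λ−1))·l(x) + 1/(4λ−2) for every x ∈ ℝ, and for 0 ≤ λ < 1/2 one has l^{λc}(x) = ∞ for every x. -/
/-! Write `u⁺ = max u 0`. For `λ > 1/2`, completing the square gives
`w² / 2 - λ (m - w)² ≤ λ m² / (2λ - 1)` for all reals `w, m`; since `u ↦ u⁺` is 1-Lipschitz,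
`(x - y)²` may be replaced by `((1 + x)⁺ - (1 + y)⁺)²`, so `l^{λc}(x) ≤ λ ((1 + x)⁺)² / (2λ - 1) - 1/2`,
with equality at `y = x + (1 + x)⁺ / (2λ - 1)`. For `λ < 1/2` the objective is, on `y ≥ -1`, a
quadratic in `y` with leading coefficient `1/2 - λ > 0`, hence unbounded. -/

open Filter

noncomputable section

def mmvLoss (x : ℝ) : ℝ := ((max (1 + x) 0) ^ 2 - 1) / 2

/-- The transform `l^{λc}` for the quadratic cost `c(x, y) = (x - y)²`. -/
def quadCostTransform (l : ℝ → ℝ) (lam x : ℝ) : EReal :=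
  ⨆ y : ℝ, ((l y - lam * (x - y) ^ 2 : ℝ) : EReal)

end

theorem EReal.iSup_coe_eq_of_le_of_eq {ι : Type*} {f : ι → ℝ} {c : ℝ} (hle : ∀ i, f i ≤ c)
    (i₀ : ι) (h₀ : f i₀ = c) : ⨆ i, (f i : EReal) = c :=
  le_antisymm (iSup_le fun i => EReal.coe_le_coe_iff.2 (hle i))
    (h₀ ▸ le_iSup (fun i => (f i : EReal)) i₀)

theorem EReal.iSup_coe_eq_top_of_tendsto {ι : Type*} {l : Filter ι} [l.NeBot] {f : ι → ℝ}
    (hf : Tendsto f l atTop) : ⨆ i, (f i : EReal) = ⊤ := by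
  refine iSup_eq_top.2 fun b hb => ?_
  obtain ⟨r, hbr, -⟩ := EReal.exists_between_coe_real hb
  obtain ⟨i, hi⟩ := (hf.eventually_gt_atTop r).exists
  exact ⟨i, hbr.trans (EReal.coe_lt_coe_iff.2 hi)⟩

theorem tendsto_quadratic_atTop {a : ℝ} (ha : 0 < a) (b c : ℝ) :
    Tendsto (fun y => a * y ^ 2 + b * y + c) atTop atTop := by
  have hlin : Tendsto (fun y => a * y + b) atTop atTop :=
    tendsto_atTop_add_const_right _ b (tendsto_id.const_mul_atTop ha)
  refine tendsto_atTop_add_const_right _ c ((tendsto_id.atTop_mul_atTop₀ hlin).congr fun y => ?_)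
  simp only [id]
  ring

section HalfLt

variable {lam : ℝ} (hlam : 1 / 2 < lam)
include hlam

theorem half_sq_sub_mul_sq_le (w m : ℝ) :
    w ^ 2 / 2 - lam * (m - w) ^ 2 ≤ lam / (2 * lam - 1) * m ^ 2 := by
  -- the form to which `field_simp` normalizes the denominator `2 * lam - 1`
  have hne : lam * 2 - 1 ≠ 0 := by linarith
  have hsq : lam / (2 * lam - 1) * m ^ 2 - (w ^ 2 / 2 - lam * (m - w) ^ 2)
      = (2 * lam * m - (2 * lam - 1) * w) ^ 2 / (2 * (2 * lam - 1)) := by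
    field_simp
    ring
  have := hsq ▸ div_nonneg (sq_nonneg (2 * lam * m - (2 * lam - 1) * w)) (by linarith)
  linarith

theorem mmvLoss_sub_le (x y : ℝ) :
    mmvLoss y - lam * (x - y) ^ 2 ≤ lam / (2 * lam - 1) * max (1 + x) 0 ^ 2 - 1 / 2 := by
  set m := max (1 + x) 0
  set w := max (1 + y) 0
  have hlip : (m - w) ^ 2 ≤ (x - y) ^ 2 :=
    sq_le_sq.2 (by simpa only [add_sub_add_left_eq_sub] using abs_max_sub_max_le_abs (1 + x) (1 + y) 0)
  have := mul_le_mul_of_nonneg_left hlip (by linarith : (0 : ℝ) ≤ lam)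
  have := half_sq_sub_mul_sq_le hlam w m
  unfold mmvLoss
  linarith

theorem mmvLoss_sub_eq (x : ℝ) :
    mmvLoss (x + max (1 + x) 0 / (2 * lam - 1)) - lam * (x - (x + max (1 + x) 0 / (2 * lam - 1))) ^ 2
      = lam / (2 * lam - 1) * max (1 + x) 0 ^ 2 - 1 / 2 := by
  have hpos : 0 < 2 * lam - 1 := by linarith
  have hne : lam * 2 - 1 ≠ 0 := by linarith
  have hmax : max (1 + (x + max (1 + x) 0 / (2 * lam - 1))) 0
      = 2 * lam * max (1 + x) 0 / (2 * lam - 1) := by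
    rcases le_total (1 + x) 0 with hx | hx
    · simp [max_eq_right hx]
    · rw [max_eq_left hx, max_eq_left (by linarith [div_nonneg hx hpos.le])]
      field_simp
      ring
  unfold mmvLoss
  rw [hmax]
  field_simp
  ring

theorem quadCostTransform_mmvLoss_of_half_lt (x : ℝ) :
    quadCostTransform mmvLoss lam x = ((lam / (2 * lam - 1) * max (1 + x) 0 ^ 2 - 1 / 2 : ℝ) : EReal) :=
  EReal.iSup_coe_eq_of_le_of_eq (mmvLoss_sub_le hlam x) _ (mmvLoss_sub_eq hlam x)

end HalfLt

theorem quadCostTransform_mmvLoss_of_lt_half {lam : ℝ} (hlam : lam < 1 / 2) (x : ℝ) :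
    quadCostTransform mmvLoss lam x = ⊤ := by
  refine EReal.iSup_coe_eq_top_of_tendsto
    ((tendsto_quadratic_atTop (by linarith : 0 < 1 / 2 - lam) (1 + 2 * lam * x) (-lam * x ^ 2)).congr'
      ?_)
  filter_upwards [eventually_ge_atTop (-1)] with y hy
  rw [mmvLoss, max_eq_left (by linarith)]
  ring

/-- for `l(x) = ((max(1+x,0))² − 1)/2` and `c(x,y) = (x−y)²`: if `λ > 1/2` then
`l^{λc}(x) = (2λ/(2λ−1))·l(x) + 1/(4λ−2)` for all `x`, and if `0 ≤ λ < 1/2` then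
`l^{λc}(x) = ∞` for all `x`. -/
theorem lambda_c_transform_monotone_mean_variance (lam : ℝ) :
    (1 / 2 < lam → ∀ x : ℝ,
      (⨆ y : ℝ, ((((max (1 + y) 0) ^ 2 - 1) / 2 - lam * (x - y) ^ 2 : ℝ) : EReal))
        = (((2 * lam / (2 * lam - 1)) * (((max (1 + x) 0) ^ 2 - 1) / 2)
            + 1 / (4 * lam - 2) : ℝ) : EReal)) ∧
    (0 ≤ lam → lam < 1 / 2 → ∀ x : ℝ,
      (⨆ y : ℝ, ((((max (1 + y) 0) ^ 2 - 1) / 2 - lam * (x - y) ^ 2 : ℝ) : EReal))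
        = (⊤ : EReal)) := by
  refine ⟨fun hlam x => ?_, fun _ hlam x => quadCostTransform_mmvLoss_of_lt_half hlam x⟩
  have hne : lam * 2 - 1 ≠ 0 := by linarith
  rw [show 4 * lam - 2 = 2 * (2 * lam - 1) by ring]
  refine (quadCostTransform_mmvLoss_of_half_lt hlam x).trans (congrArg _ ?_)
  field_simp
  ring
end

section
/- Let h(y) = (y−k)⁺ and c(x,y) = (x−y)²/2. Then for every λ > 0, α ∈ ℝ, s ∈ ℝ, and x ∈ ℝ, sup_y ( (y−k)⁺ + α(y−s) − λ(y−x)²/2 ) = ( x − (k − (2α+1)/(2λ)) )⁺ + α(x−s) + α²/(2λ). -/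
open MeasureTheory Set Filter Topology

/-- for `h(y) = (y−k)⁺` and `c(x,y) = (x−y)²/2`, for every `λ > 0`, `α, s, x ∈ ℝ`:
`sup_y ((y−k)⁺ + α(y−s) − λ(y−x)²/2) = (x − (k − (2α+1)/(2λ)))⁺ + α(x−s) + α²/(2λ)`. -/
theorem robust_call_transform (k s α lam : ℝ) (hlam : 0 < lam) (x : ℝ) :
    (⨆ y : ℝ, ((max (y - k) 0 + α * (y - s) - lam * (y - x) ^ 2 / 2 : ℝ) : EReal))
      = ((max (x - (k - (2 * α + 1) / (2 * lam))) 0 + α * (x - s) + α ^ 2 / (2 * lam) : ℝ) : EReal) := by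
  have hlam' : lam ≠ 0 := ne_of_gt hlam
  apply le_antisymm
  · apply iSup_le
    intro y
    rw [EReal.coe_le_coe_iff]
    rcases le_total (y - k) 0 with h | h
    · rw [max_eq_right h, zero_add]
      have hx : lam * (α * (y - s) - lam * (y - x) ^ 2 / 2)
          ≤ lam * (α * (x - s) + α ^ 2 / (2 * lam)) := by
        have e2 : lam * (α ^ 2 / (2 * lam)) = α ^ 2 / 2 := by field_simp
        nlinarith [sq_nonneg (lam * (y - x) - α)]
      have h2 := le_of_mul_le_mul_left hx hlam
      calc α * (y - s) - lam * (y - x) ^ 2 / 2 ≤ α * (x - s) + α ^ 2 / (2 * lam) := h2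
        _ ≤ _ := by nlinarith [le_max_right (x - (k - (2 * α + 1) / (2 * lam))) 0]
    · rw [max_eq_left h]
      have h2 : (y - k) + α * (y - s) - lam * (y - x) ^ 2 / 2
          ≤ (x - (k - (2 * α + 1) / (2 * lam))) + α * (x - s) + α ^ 2 / (2 * lam) := by
        have hx : lam * ((y - k) + α * (y - s) - lam * (y - x) ^ 2 / 2)
            ≤ lam * ((x - (k - (2 * α + 1) / (2 * lam))) + α * (x - s) + α ^ 2 / (2 * lam)) := by
          have e1 : lam * ((2 * α + 1) / (2 * lam)) = (2 * α + 1) / 2 := by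
            field_simp
          have e2 : lam * (α ^ 2 / (2 * lam)) = α ^ 2 / 2 := by
            field_simp
          nlinarith [sq_nonneg (lam * (y - x) - (1 + α))]
        exact le_of_mul_le_mul_left hx hlam
      calc (y - k) + α * (y - s) - lam * (y - x) ^ 2 / 2 ≤ _ := h2
        _ ≤ _ := by nlinarith [le_max_left (x - (k - (2 * α + 1) / (2 * lam))) 0]
  · rcases le_total (x - (k - (2 * α + 1) / (2 * lam))) 0 with h | h
    · rw [max_eq_right h]
      refine le_trans ?_ (le_iSup _ (x + α / lam))
      rw [EReal.coe_le_coe_iff]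
      have hyk : (x + α / lam) - k ≤ 0 := by
        have : α / lam - (2 * α + 1) / (2 * lam) = -(1 / (2 * lam)) := by
          field_simp; ring
        nlinarith [one_div_pos.mpr (mul_pos two_pos hlam)]
      rw [max_eq_right hyk]
      have e : lam * ((x + α / lam) - x) ^ 2 / 2 = α ^ 2 / (2 * lam) := by
        field_simp; ring
      rw [e, zero_add]
      exact le_of_eq (by field_simp; ring)
    · rw [max_eq_left h]
      refine le_trans ?_ (le_iSup _ (x + (1 + α) / lam))
      rw [EReal.coe_le_coe_iff]
      have hyk : 0 ≤ (x + (1 + α) / lam) - k := by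
        have : (1 + α) / lam - (2 * α + 1) / (2 * lam) = 1 / (2 * lam) := by
          field_simp; ring
        nlinarith [one_div_pos.mpr (mul_pos two_pos hlam)]
      rw [max_eq_left hyk]
      have e : lam * ((x + (1 + α) / lam) - x) ^ 2 / 2 = (1 + α) ^ 2 / (2 * lam) := by
        field_simp; ring
      rw [e]
      have e2 : x - (k - (2 * α + 1) / (2 * lam)) + α * (x - s) + α ^ 2 / (2 * lam)
          = x + (1 + α) / lam - k + α * (x + (1 + α) / lam - s) - (1 + α) ^ 2 / (2 * lam) := by
        field_simp; ring
      rw [e2]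
end

section
/- Let 𝒟 be a nonempty set of probability measures on ℝ that is tight and such that for all μ, μ̃ ∈ 𝒟 there exists ν ∈ 𝒟 with ν(−∞,t] ≤ min(μ(−∞,t], μ̃(−∞,t]) for all t. Then F̲(t) := inf_{μ ∈ 𝒟} μ(−∞,t] is a cumulative distribution function of a probability measure on ℝ (i.e., F̲ is nondecreasing, right-continuous, tends to 0 at −∞ and to 1 at +∞). -/
/-!
Each `t ↦ μ(−∞, t]` is nondecreasing and right-continuous, so their infimum is
nondecreasing and, as an infimum of upper semicontinuous functions, upper semicontinuous
from the right; for a nondecreasing function this is right-continuity. At `−∞` the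
infimum is squeezed by the distribution function of any one member of `𝒟`. At `+∞`,
tightness makes the tails `μ(t, ∞)` small uniformly in `μ ∈ 𝒟`, so `μ(−∞, t] = 1 − μ(t, ∞)`
is uniformly close to `1`.
-/

open MeasureTheory Set Filter Topology ENNReal

noncomputable section

/-- `F̲(t) = inf_{μ ∈ 𝒟} μ(−∞,t]`. -/
def lowerCDF (D : Set (Measure ℝ)) (t : ℝ) : ℝ := (⨅ μ ∈ D, μ (Set.Iic t)).toReal

theorem Monotone.continuousWithinAt_Ici_of_upperSemicontinuousWithinAt {α γ : Type*}
    [Preorder α] [TopologicalSpace α] [LinearOrder γ] [TopologicalSpace γ] [OrderTopology γ]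
    {f : α → γ} (hf : Monotone f) {t : α} (h : UpperSemicontinuousWithinAt f (Ici t) t) :
    ContinuousWithinAt f (Ici t) t :=
  continuousWithinAt_iff_lower_upperSemicontinuousWithinAt.2
    ⟨fun _ hy => eventually_nhdsWithin_of_forall fun _ hs => hy.trans_le (hf hs), h⟩

theorem biInter_gt_Iic {α : Type*} [LinearOrder α] [DenselyOrdered α] (t : α) :
    ⋂ r > t, Iic r = Iic t := by
  ext x
  simp only [mem_iInter, mem_Iic]
  exact ⟨le_of_forall_gt_imp_ge_of_dense, fun hx _ hr => hx.trans hr.le⟩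

section MeasureIic

variable {α : Type*} [LinearOrder α] [TopologicalSpace α] [OrderTopology α]
  [MeasurableSpace α] [OpensMeasurableSpace α] (μ : Measure α) [IsFiniteMeasure μ]

theorem continuousWithinAt_Ici_measure_Iic [FirstCountableTopology α] [DenselyOrdered α]
    [NoMaxOrder α] (t : α) : ContinuousWithinAt (fun s => μ (Iic s)) (Ici t) t := by
  rw [← continuousWithinAt_Ioi_iff_Ici, ContinuousWithinAt, ← biInter_gt_Iic t]
  obtain ⟨r, hr⟩ := exists_gt t
  exact tendsto_measure_biInter_gt (fun _ _ => measurableSet_Iic.nullMeasurableSet)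
    (fun _ _ _ hij => Iic_subset_Iic.2 hij) ⟨r, hr, measure_ne_top μ _⟩

theorem tendsto_measure_Iic_atBot [(atBot : Filter α).IsCountablyGenerated] [NoMinOrder α] :
    Tendsto (fun t => μ (Iic t)) atBot (𝓝 0) := by
  rcases isEmpty_or_nonempty α with hα | ⟨⟨a⟩⟩
  · exact tendsto_of_isEmpty
  · have h := tendsto_measure_iInter_atBot (μ := μ) (s := Iic)
      (fun _ => measurableSet_Iic.nullMeasurableSet) (fun _ _ => Iic_subset_Iic.2)
      ⟨a, measure_ne_top μ _⟩
    rwa [iInter_Iic_eq_empty_iff.2 (by simp), measure_empty] at h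

end MeasureIic

theorem tendsto_iSup_measure_Ioi_atTop {S : Set (Measure ℝ)} (hS : IsTightMeasureSet S) :
    Tendsto (fun t => ⨆ μ ∈ S, μ (Ioi t)) atTop (𝓝 0) :=
  tendsto_of_tendsto_of_tendsto_of_le_of_le tendsto_const_nhds
    (tendsto_measure_norm_gt_of_isTightMeasureSet hS) (fun _ => bot_le)
    fun _ => iSup₂_mono fun _ _ => measure_mono fun x (hx : _ < x) =>
      hx.trans_le (le_abs_self x)

theorem monotone_iInf_measure_Iic (D : Set (Measure ℝ)) :
    Monotone fun t => ⨅ μ ∈ D, μ (Iic t) :=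
  fun _ _ hst => iInf₂_mono fun _ _ => measure_mono (Iic_subset_Iic.2 hst)

theorem continuousWithinAt_Ici_iInf_measure_Iic {D : Set (Measure ℝ)}
    (hD : ∀ μ ∈ D, IsFiniteMeasure μ) (t : ℝ) :
    ContinuousWithinAt (fun s => ⨅ μ ∈ D, μ (Iic s)) (Ici t) t :=
  (monotone_iInf_measure_Iic D).continuousWithinAt_Ici_of_upperSemicontinuousWithinAt <|
    upperSemicontinuousWithinAt_biInf fun μ hμ =>
      have := hD μ hμ
      (continuousWithinAt_Ici_measure_Iic μ t).upperSemicontinuousWithinAt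

theorem tendsto_iInf_measure_Iic_atBot {D : Set (Measure ℝ)} {μ : Measure ℝ} [IsFiniteMeasure μ]
    (hμ : μ ∈ D) : Tendsto (fun t => ⨅ ν ∈ D, ν (Iic t)) atBot (𝓝 0) :=
  tendsto_of_tendsto_of_tendsto_of_le_of_le tendsto_const_nhds (tendsto_measure_Iic_atBot μ)
    (fun _ => bot_le) fun _ => biInf_le _ hμ

theorem tendsto_iInf_measure_Iic_atTop {D : Set (Measure ℝ)} (hne : D.Nonempty)
    (hD : ∀ μ ∈ D, IsProbabilityMeasure μ) (htight : IsTightMeasureSet D) :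
    Tendsto (fun t => ⨅ μ ∈ D, μ (Iic t)) atTop (𝓝 1) := by
  obtain ⟨μ₀, hμ₀⟩ := hne
  have hlower : Tendsto (fun t => 1 - ⨆ μ ∈ D, μ (Ioi t)) atTop (𝓝 1) := by
    simpa using ENNReal.Tendsto.sub tendsto_const_nhds (tendsto_iSup_measure_Ioi_atTop htight)
      (.inl one_ne_top)
  refine tendsto_of_tendsto_of_tendsto_of_le_of_le hlower tendsto_const_nhds (fun t => ?_)
    fun t => (biInf_le _ hμ₀).trans (have := hD μ₀ hμ₀; prob_le_one)
  refine le_iInf₂ fun μ hμ => ?_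
  have := hD μ hμ
  calc 1 - ⨆ ν ∈ D, ν (Ioi t)
      _ ≤ 1 - μ (Ioi t) := tsub_le_tsub_left (le_iSup₂ (f := fun ν _ => ν (Ioi t)) μ hμ) 1
      _ = μ (Iic t) := by rw [← prob_compl_eq_one_sub measurableSet_Ioi, compl_Ioi]

theorem lowerCDF_is_CDF_general (D : Set (Measure ℝ)) (hne : D.Nonempty)
    (hprob : ∀ μ ∈ D, IsProbabilityMeasure μ)
    (htight : ∀ ε : ℝ≥0∞, 0 < ε → ∃ K : Set ℝ, IsCompact K ∧ ∀ μ ∈ D, μ Kᶜ ≤ ε) :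
    Monotone (lowerCDF D) ∧
    (∀ t : ℝ, ContinuousWithinAt (lowerCDF D) (Set.Ici t) t) ∧
    Tendsto (lowerCDF D) atBot (𝓝 0) ∧
    Tendsto (lowerCDF D) atTop (𝓝 1) := by
  obtain ⟨μ₀, hμ₀⟩ := hne
  have := hprob μ₀ hμ₀
  have hfin : ∀ t, ⨅ μ ∈ D, μ (Iic t) ≠ ∞ := fun t =>
    ((biInf_le _ hμ₀).trans_lt (measure_lt_top μ₀ _)).ne
  have hD : IsTightMeasureSet D :=
    isTightMeasureSet_iff_exists_isCompact_measure_compl_le.2 htight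
  have hF : lowerCDF D = ENNReal.toReal ∘ fun t => ⨅ μ ∈ D, μ (Iic t) := rfl
  rw [hF]
  refine ⟨fun s t hst => toReal_mono (hfin t) (monotone_iInf_measure_Iic D hst),
    fun t => ?_, ?_, ?_⟩
  · exact (continuousAt_toReal (hfin t)).comp_continuousWithinAt
      (f := fun s => ⨅ μ ∈ D, μ (Iic s))
      (continuousWithinAt_Ici_iInf_measure_Iic
        (fun μ hμ => have := hprob μ hμ; inferInstance) t)
  · simpa using (tendsto_toReal zero_ne_top).comp (tendsto_iInf_measure_Iic_atBot hμ₀)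
  · simpa using (tendsto_toReal one_ne_top).comp
      (tendsto_iInf_measure_Iic_atTop ⟨μ₀, hμ₀⟩ hprob hD)

/-- if `𝒟` is a nonempty tight set of probability measures on `ℝ` which is
downward directed in distribution, then `F̲(t) = inf_{μ ∈ 𝒟} μ(−∞,t]` is a cumulative
distribution function of a probability measure: nondecreasing, right-continuous, with limits
`0` at `−∞` and `1` at `+∞`. -/
theorem lowerCDF_is_CDF (D : Set (Measure ℝ)) (hne : D.Nonempty)
    (hprob : ∀ μ ∈ D, IsProbabilityMeasure μ)
    (htight : ∀ ε : ℝ≥0∞, 0 < ε → ∃ K : Set ℝ, IsCompact K ∧ ∀ μ ∈ D, μ Kᶜ ≤ ε)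
    (hdir : ∀ μ ∈ D, ∀ μ' ∈ D, ∃ ν ∈ D, ∀ t : ℝ,
      ν (Set.Iic t) ≤ min (μ (Set.Iic t)) (μ' (Set.Iic t))) :
    Monotone (lowerCDF D) ∧
    (∀ t : ℝ, ContinuousWithinAt (lowerCDF D) (Set.Ici t) t) ∧
    Tendsto (lowerCDF D) atBot (𝓝 0) ∧
    Tendsto (lowerCDF D) atTop (𝓝 1) :=
  lowerCDF_is_CDF_general D hne hprob htight

end
end

section
/- Let 𝒟 be a nonempty set of probability measures on ℝ satisfying tightness and the downward-directedness condition on CDFs (for all μ, μ̃ ∈ 𝒟 there exists ν ∈ 𝒟 with ν(−∞,t] ≤ min(μ(−∞,t], μ̃(−∞,t]) for all t). Then there exists a probability measure μ* on ℝ such that sup_{μ ∈ 𝒟} ∫ f dμ = ∫ f dμ* for every increasing, continuous, bounded function f : ℝ → ℝ. -/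
/-!
The measure `μ*` is the Stieltjes measure of `F̲ = inf_{μ ∈ 𝒟} cdf μ`: an infimum of increasing
right-continuous functions is again one (upper semicontinuity passes to infima), `F̲ ≤ cdf μ` gives
the limit `0` at `-∞`, and tightness gives the limit `1` at `+∞`.

For increasing continuous `f`, each set `{f ≤ t}` is closed and lower, hence `∅`, `ℝ` or some
`Iic u`, so the layer-cake tails `μ {t < f}` are read off `cdf μ`. Comparing left and right Riemann
sums of these antitone tails on a grid of mesh `δ` shows that `∫ f dμ ≤ ∫ f dν + δ` as soon as
`cdf ν ≤ cdf μ + ε` at finitely many points depending only on `f` and `δ`. As `cdf μ* ≤ cdf μ` on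
`𝒟`, this gives `∫ f dμ ≤ ∫ f dμ*`; directedness provides `ν ∈ 𝒟` whose cdf is `ε`-close to `F̲`
at those finitely many points, whence `∫ f dμ* ≤ ∫ f dν + δ`.
-/

open MeasureTheory Set Filter Topology ENNReal ProbabilityTheory

theorem MeasureTheory.Integrable.integral_eq_integral_Ioc_meas_lt {α : Type*} [MeasurableSpace α]
    {μ : Measure α} {f : α → ℝ} {M : ℝ} (f_intble : Integrable f μ) (f_nn : 0 ≤ᵐ[μ] f)
    (f_bdd : f ≤ᵐ[μ] fun _ ↦ M) :
    ∫ ω, f ω ∂μ = ∫ t in Ioc 0 M, μ.real {a : α | t < f a} := by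
  rw [f_intble.integral_eq_integral_Ioc_meas_le f_nn f_bdd]
  refine integral_congr_ae ?_
  filter_upwards [meas_le_ae_eq_meas_lt μ (volume.restrict (Ioc 0 M)) f] with t ht
  exact congrArg ENNReal.toReal ht

open Finset in
theorem integral_le_integral_add_of_measureReal_lt_le_add {α : Type*} [MeasurableSpace α]
    {μ ν : Measure α} [IsProbabilityMeasure μ] [IsProbabilityMeasure ν] {g : α → ℝ}
    (hg : Measurable g) {n : ℕ} (hg_nonneg : ∀ x, 0 ≤ g x) (hg_le : ∀ x, g x ≤ n) {ε : ℝ}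
    (h : ∀ i < n, μ.real {x | (i : ℝ) < g x} ≤ ν.real {x | (i : ℝ) < g x} + ε) :
    ∫ x, g x ∂μ ≤ ∫ x, g x ∂ν + 1 + n * ε := by
  set T : Measure α → ℝ → ℝ := fun ρ t ↦ ρ.real {x | t < g x}
  have hT : ∀ ρ : Measure α, [IsFiniteMeasure ρ] → Antitone (T ρ) :=
    fun ρ _ s t hst ↦ measureReal_mono fun x hx ↦ hst.trans_lt hx
  have layer : ∀ ρ : Measure α, [IsProbabilityMeasure ρ] →
      ∫ x, g x ∂ρ = ∫ t in (0 : ℝ)..0 + n, T ρ t := by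
    intro ρ _
    have hint : Integrable g ρ := .of_bound hg.aestronglyMeasurable n
      (.of_forall fun x ↦ by rw [Real.norm_of_nonneg (hg_nonneg x)]; exact hg_le x)
    rw [zero_add, intervalIntegral.integral_of_le n.cast_nonneg,
      hint.integral_eq_integral_Ioc_meas_lt (.of_forall hg_nonneg) (.of_forall hg_le)]
  have telescope : ∑ i ∈ range n, (T ν (0 + i) - T ν (0 + ↑(i + 1))) ≤ 1 := by
    rw [sum_range_sub' (fun i : ℕ ↦ T ν (0 + i))]
    exact (sub_le_self _ measureReal_nonneg).trans measureReal_le_one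
  calc ∫ x, g x ∂μ = ∫ t in (0 : ℝ)..0 + n, T μ t := layer μ
    _ ≤ ∑ i ∈ range n, T μ (0 + i) := ((hT μ).antitoneOn _).integral_le_sum
    _ ≤ ∑ i ∈ range n, (T ν (0 + i) + ε) :=
        sum_le_sum fun i hi ↦ by simpa only [zero_add] using h i (mem_range.1 hi)
    _ = ∑ i ∈ range n, (T ν (0 + i) - T ν (0 + ↑(i + 1))) +
          ∑ i ∈ range n, T ν (0 + ↑(i + 1)) + n * ε := by
        simp only [sum_add_distrib, sum_sub_distrib, sum_const, card_range, nsmul_eq_mul]; ring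
    _ ≤ 1 + (∫ t in (0 : ℝ)..0 + n, T ν t) + n * ε :=
        add_le_add (add_le_add telescope ((hT ν).antitoneOn _).sum_le_integral) le_rfl
    _ = ∫ x, g x ∂ν + 1 + n * ε := by
        rw [layer ν]; ring

theorem IsLowerSet.eq_empty_or_eq_univ_or_eq_Iic {α : Type*} [ConditionallyCompleteLinearOrder α]
    [TopologicalSpace α] [OrderTopology α] {L : Set α} (hL : IsLowerSet L) (hc : IsClosed L) :
    L = ∅ ∨ L = univ ∨ ∃ u, L = Iic u := by
  rcases L.eq_empty_or_nonempty with rfl | hne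
  · exact Or.inl rfl
  by_cases hb : BddAbove L
  · exact Or.inr <| Or.inr ⟨sSup L,
      Subset.antisymm (fun x hx ↦ le_csSup hb hx) fun x hx ↦ hL hx (hc.csSup_mem hne hb)⟩
  · refine Or.inr <| Or.inl <| eq_univ_of_forall fun x ↦ ?_
    obtain ⟨y, hy, hxy⟩ := not_bddAbove_iff.1 hb x
    exact hL hxy.le hy

theorem measureReal_le_add_of_cdf_le_add {μ ν : Measure ℝ} [IsProbabilityMeasure μ]
    [IsProbabilityMeasure ν] {L : Set ℝ} (hL : IsLowerSet L) (hc : IsClosed L) {ε : ℝ}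
    (hε : 0 ≤ ε) (h : ∀ u, L = Iic u → cdf ν u ≤ cdf μ u + ε) :
    ν.real L ≤ μ.real L + ε := by
  rcases hL.eq_empty_or_eq_univ_or_eq_Iic hc with rfl | rfl | ⟨u, rfl⟩
  · simpa using hε
  · simpa using hε
  · simpa only [← cdf_eq_real] using h u rfl

theorem cdf_le_cdf_of_measure_Iic_le {μ ν : Measure ℝ} [IsProbabilityMeasure μ]
    [IsProbabilityMeasure ν] (h : ∀ t, ν (Iic t) ≤ μ (Iic t)) : ⇑(cdf ν) ≤ ⇑(cdf μ) :=
  fun t ↦ (ENNReal.ofReal_le_ofReal_iff (cdf_nonneg μ t)).1 (by simpa only [ofReal_cdf] using h t)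

theorem bddBelow_range_cdf {ι : Type*} (μ : ι → Measure ℝ) (t : ℝ) :
    BddBelow (range fun i ↦ cdf (μ i) t) :=
  ⟨0, by rintro _ ⟨i, rfl⟩; exact cdf_nonneg _ t⟩

noncomputable def infCdf (D : Set (Measure ℝ)) : StieltjesFunction ℝ where
  toFun t := ⨅ μ : D, cdf (μ : Measure ℝ) t
  mono' _ _ hst := ciInf_mono (bddBelow_range_cdf _ _) fun μ ↦ monotone_cdf _ hst
  right_continuous' x := by
    refine continuousWithinAt_iff_lower_upperSemicontinuousWithinAt.2 ⟨?_, ?_⟩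
    · exact fun y hy ↦ eventually_nhdsWithin_of_forall fun t ht ↦ hy.trans_le <|
        ciInf_mono (bddBelow_range_cdf _ _) fun μ ↦ monotone_cdf _ ht
    · exact upperSemicontinuousWithinAt_ciInf (.of_forall (bddBelow_range_cdf _))
        fun μ ↦ ((cdf _).right_continuous x).upperSemicontinuousWithinAt

section infCdf

variable {D : Set (Measure ℝ)}

theorem infCdf_le_cdf {μ : Measure ℝ} (hμ : μ ∈ D) (t : ℝ) : infCdf D t ≤ cdf μ t :=
  ciInf_le (bddBelow_range_cdf _ t) (⟨μ, hμ⟩ : D)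

theorem tendsto_infCdf_atBot (hne : D.Nonempty) : Tendsto (infCdf D) atBot (𝓝 0) := by
  obtain ⟨μ, hμ⟩ := hne
  exact tendsto_of_tendsto_of_tendsto_of_le_of_le tendsto_const_nhds (tendsto_cdf_atBot μ)
    (fun t ↦ Real.iInf_nonneg fun _ ↦ cdf_nonneg _ t) (infCdf_le_cdf hμ)

theorem tendsto_infCdf_atTop (hne : D.Nonempty) (hprob : ∀ μ ∈ D, IsProbabilityMeasure μ)
    (htight : ∀ ε : ℝ≥0∞, 0 < ε → ∃ K : Set ℝ, IsCompact K ∧ ∀ μ ∈ D, μ Kᶜ ≤ ε) :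
    Tendsto (infCdf D) atTop (𝓝 1) := by
  have := hne.to_subtype
  obtain ⟨μ₀, hμ₀⟩ := hne
  refine tendsto_order.2 ⟨fun a ha ↦ ?_, fun a ha ↦ .of_forall fun t ↦
    (infCdf_le_cdf hμ₀ t).trans_lt ((cdf_le_one μ₀ t).trans_lt ha)⟩
  obtain ⟨K, hK, hKD⟩ := htight (ENNReal.ofReal ((1 - a) / 2)) (by simpa using ha)
  obtain ⟨M, hM⟩ := hK.bddAbove
  filter_upwards [eventually_ge_atTop M] with t ht
  refine (show a < (1 + a) / 2 by linarith).trans_le (le_ciInf fun ⟨μ, hμ⟩ ↦ ?_)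
  have := hprob μ hμ
  have htail : μ.real (Iic t)ᶜ ≤ (1 - a) / 2 := by
    refine ENNReal.toReal_le_of_le_ofReal (by linarith) ((measure_mono ?_).trans (hKD μ hμ))
    exact fun x hx hxK ↦ hx ((hM hxK).trans ht)
  rw [probReal_compl_eq_one_sub measurableSet_Iic] at htail
  rw [cdf_eq_real]
  linarith

theorem exists_cdf_le_infCdf_add (hne : D.Nonempty)
    (hdir : Directed (· ≥ ·) fun μ : D ↦ ⇑(cdf (μ : Measure ℝ))) {S : Set ℝ} (hS : S.Finite)
    {ε : ℝ} (hε : 0 < ε) : ∃ ν ∈ D, ∀ u ∈ S, cdf ν u ≤ infCdf D u + ε := by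
  classical
  have := hne.to_subtype
  choose μ hμ using fun u ↦ exists_lt_of_ciInf_lt (lt_add_of_pos_right (infCdf D u) hε)
  obtain ⟨ν, hν⟩ := hdir.finset_le (hS.toFinset.image μ)
  exact ⟨ν, ν.2, fun u hu ↦
    (hν _ (Finset.mem_image_of_mem _ (hS.mem_toFinset.2 hu)) u).trans (hμ u).le⟩

end infCdf

theorem exists_finite_forall_integral_le_add_of_cdf_le_add {f : ℝ → ℝ} (hmono : Monotone f)
    (hcont : Continuous f) {C : ℝ} (hC : ∀ x, |f x| ≤ C) {δ : ℝ} (hδ : 0 < δ) :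
    ∃ S : Set ℝ, S.Finite ∧ ∃ ε > 0, ∀ (μ ν : Measure ℝ) [IsProbabilityMeasure μ]
      [IsProbabilityMeasure ν], (∀ u ∈ S, cdf ν u ≤ cdf μ u + ε) →
        ∫ x, f x ∂μ ≤ ∫ x, f x ∂ν + δ := by
  -- `g` measures `f + C` in units of `δ / 2`; the unit-grid comparison then costs
  -- `1 + n ε ≤ 2` such units.
  obtain ⟨n, hn⟩ := exists_nat_ge (4 * C / δ)
  set g : ℝ → ℝ := fun x ↦ 2 * (f x + C) / δ
  have hg_cont : Continuous g := by fun_prop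
  have hg_mono : Monotone g := fun x y hxy ↦ by simp only [g]; gcongr; exact hmono hxy
  have hg_nonneg : ∀ x, 0 ≤ g x := fun x ↦
    div_nonneg (by linarith [(abs_le.1 (hC x)).1]) hδ.le
  have hg_le : ∀ x, g x ≤ n := fun x ↦ by
    rw [div_le_iff₀ hδ]
    linarith [(abs_le.1 (hC x)).2, (div_le_iff₀ hδ).1 hn]
  have hf_int : ∀ ρ : Measure ℝ, [IsFiniteMeasure ρ] → Integrable f ρ := fun ρ _ ↦
    .of_bound hcont.aestronglyMeasurable C (.of_forall hC)
  have hg_int : ∀ ρ : Measure ℝ, [IsProbabilityMeasure ρ] →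
      ∫ x, g x ∂ρ = 2 * (∫ x, f x ∂ρ + C) / δ := fun ρ _ ↦ by
    rw [integral_div, integral_const_mul, integral_add (hf_int ρ) (integrable_const C),
      integral_const, probReal_univ, one_smul]
  refine ⟨⋃ i ∈ Finset.range n, {u | {x | g x ≤ i} = Iic u},
    (Finset.range n).finite_toSet.biUnion fun i _ ↦
      Set.Subsingleton.finite fun u hu v hv ↦ Iic_injective (hu.symm.trans hv),
    1 / (n + 1), by positivity, fun μ ν _ _ hS ↦ ?_⟩
  have hgrid : ∀ i < n, μ.real {x | (i : ℝ) < g x} ≤ ν.real {x | (i : ℝ) < g x} + 1 / (n + 1) := by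
    intro i hi
    have hL := measureReal_le_add_of_cdf_le_add (μ := μ) (ν := ν) (L := {x | g x ≤ i})
      (fun a b hba ha ↦ (hg_mono hba).trans ha) (isClosed_le hg_cont continuous_const)
      (by positivity) fun u hu ↦ hS u (mem_biUnion (Finset.mem_coe.2 (Finset.mem_range.2 hi)) hu)
    have hcompl : {x | (i : ℝ) < g x} = {x | g x ≤ i}ᶜ := by ext; simp
    have hmeas : MeasurableSet {x | g x ≤ i} := measurableSet_le hg_cont.measurable measurable_const
    rw [hcompl, probReal_compl_eq_one_sub hmeas, probReal_compl_eq_one_sub hmeas]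
    linarith
  have key := integral_le_integral_add_of_measureReal_lt_le_add hg_cont.measurable hg_nonneg
    hg_le hgrid
  have hnε : (n : ℝ) * (1 / (n + 1)) ≤ 1 := by
    rw [mul_one_div, div_le_one (by positivity)]; linarith
  rw [hg_int μ, hg_int ν] at key
  have : 2 * (∫ x, f x ∂μ + C) / δ ≤ (2 * (∫ x, f x ∂ν + C) + 2 * δ) / δ := by
    rw [add_div, mul_div_cancel_right₀ _ hδ.ne']; linarith
  rw [div_le_div_iff_of_pos_right hδ] at this
  linarith

theorem integral_le_integral_of_cdf_le {μ ν : Measure ℝ} [IsProbabilityMeasure μ]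
    [IsProbabilityMeasure ν] (h : ⇑(cdf ν) ≤ ⇑(cdf μ)) {f : ℝ → ℝ} (hmono : Monotone f)
    (hcont : Continuous f) {C : ℝ} (hC : ∀ x, |f x| ≤ C) : ∫ x, f x ∂μ ≤ ∫ x, f x ∂ν :=
  le_of_forall_pos_le_add fun δ hδ ↦ by
    obtain ⟨S, -, ε, hε, hS⟩ := exists_finite_forall_integral_le_add_of_cdf_le_add hmono hcont hC hδ
    exact hS μ ν fun u _ ↦ (h u).trans (le_add_of_nonneg_right hε.le)

/-- if `𝒟` is a nonempty tight set of probability measures on `ℝ` which is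
downward directed in distribution, then there exists a probability measure `μ*` such that
`sup_{μ ∈ 𝒟} ∫ f dμ = ∫ f dμ*` for every increasing, continuous, bounded `f : ℝ → ℝ`. -/
theorem sup_integral_attained (D : Set (Measure ℝ)) (hne : D.Nonempty)
    (hprob : ∀ μ ∈ D, IsProbabilityMeasure μ)
    (htight : ∀ ε : ℝ≥0∞, 0 < ε → ∃ K : Set ℝ, IsCompact K ∧ ∀ μ ∈ D, μ Kᶜ ≤ ε)
    (hdir : ∀ μ ∈ D, ∀ μ' ∈ D, ∃ ν ∈ D, ∀ t : ℝ,
      ν (Set.Iic t) ≤ min (μ (Set.Iic t)) (μ' (Set.Iic t))) :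
    ∃ μstar : Measure ℝ, IsProbabilityMeasure μstar ∧
      ∀ f : ℝ → ℝ, Monotone f → Continuous f → (∃ C : ℝ, ∀ x, |f x| ≤ C) →
        (⨆ μ : D, ∫ x, f x ∂(μ : Measure ℝ)) = ∫ x, f x ∂μstar := by
  have hdir_cdf : Directed (· ≥ ·) fun μ : D ↦ ⇑(cdf (μ : Measure ℝ)) := by
    rintro ⟨μ, hμ⟩ ⟨μ', hμ'⟩
    obtain ⟨ν, hν, hle⟩ := hdir μ hμ μ' hμ'
    have := hprob μ hμ; have := hprob μ' hμ'; have := hprob ν hν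
    exact ⟨⟨ν, hν⟩, cdf_le_cdf_of_measure_Iic_le fun t ↦ (hle t).trans (min_le_left _ _),
      cdf_le_cdf_of_measure_Iic_le fun t ↦ (hle t).trans (min_le_right _ _)⟩
  have hbot := tendsto_infCdf_atBot hne
  have htop := tendsto_infCdf_atTop hne hprob htight
  have hcdf : cdf (infCdf D).measure = infCdf D := cdf_measure_stieltjesFunction _ hbot htop
  have hμstar := (infCdf D).isProbabilityMeasure hbot htop
  refine ⟨(infCdf D).measure, hμstar, fun f hmono hcont ⟨C, hC⟩ ↦ ?_⟩
  have := hne.to_subtype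
  refine ciSup_eq_of_forall_le_of_forall_lt_exists_gt (fun ⟨μ, hμ⟩ ↦ ?_) fun w hw ↦ ?_
  · have := hprob μ hμ
    refine integral_le_integral_of_cdf_le ?_ hmono hcont hC
    rw [hcdf]
    exact infCdf_le_cdf hμ
  · obtain ⟨S, hS, ε, hε, hint⟩ := exists_finite_forall_integral_le_add_of_cdf_le_add hmono
      hcont hC (half_pos (sub_pos.2 hw))
    obtain ⟨ν, hν, hνS⟩ := exists_cdf_le_infCdf_add hne hdir_cdf hS hε
    have := hprob ν hν
    have := hint _ ν fun u hu ↦ hcdf ▸ hνS u hu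
    exact ⟨⟨ν, hν⟩, by linarith⟩
end

section
/- Let l : ℝ → ℝ be convex, increasing, bounded from below, with l(0) = 0 and l(x) > x for all sufficiently large |x|, and let μ be a probability measure on ℝ with bounded support. Then the infimum inf_{m ∈ ℝ} ( ∫ l(x−m) dμ(x) + m ) is attained at some m* ∈ ℝ. -/
open MeasureTheory Set Filter Topology

/-- for `l` convex, increasing, bounded from below, with `l(0) = 0` and
`l(x) > x` for all sufficiently large `|x|`, and `μ` a probability measure with bounded
support, the infimum `inf_m ( ∫ l(x−m) dμ + m )` is attained at some `m*`. -/
theorem OCE_minimizer_exists (l : ℝ → ℝ)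
    (hconv : ConvexOn ℝ Set.univ l) (hmono : Monotone l)
    (hlb : ∃ B : ℝ, ∀ x, B ≤ l x) (h0 : l 0 = 0)
    (hgrow : ∃ R : ℝ, ∀ x : ℝ, R ≤ |x| → x < l x)
    (μ : Measure ℝ) [IsProbabilityMeasure μ]
    (M : ℝ) (hsupp : μ (Set.Icc (-M) M) = 1) :
    ∃ mstar : ℝ, ∀ m : ℝ,
      (∫ x, l (x - mstar) ∂μ) + mstar ≤ (∫ x, l (x - m) ∂μ) + m := by
  obtain ⟨B, hB⟩ := hlb
  obtain ⟨R, hR⟩ := hgrow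
  have hlcont : Continuous l := by
    have := hconv.locallyLipschitz.continuous
    exact this
  have hlmeas : Measurable l := hlcont.measurable
  -- a.e. support
  have hae : ∀ᵐ x ∂μ, x ∈ Set.Icc (-M) M := by
    have hc : μ (Set.Icc (-M) M)ᶜ = 0 := by
      rw [measure_compl measurableSet_Icc (measure_ne_top μ _), hsupp, measure_univ]
      simp
    rw [Filter.eventually_iff, mem_ae_iff]
    exact hc
  have hM : 0 ≤ M := by
    by_contra h
    push_neg at h
    have : Set.Icc (-M) M = (∅ : Set ℝ) := Set.Icc_eq_empty (by linarith)
    rw [this] at hsupp; simp at hsupp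
  -- integrability
  have hint : ∀ m : ℝ, Integrable (fun x => l (x - m)) μ := by
    intro m
    refine Integrable.mono' (integrable_const (max |B| |l (M - m)|)) ?_ ?_
    · exact (hlmeas.comp (measurable_id.sub measurable_const)).aestronglyMeasurable
    · filter_upwards [hae] with x hx
      rw [Real.norm_eq_abs, abs_le]
      constructor
      · calc -(max |B| |l (M - m)|) ≤ -|B| := by simp
          _ ≤ B := neg_abs_le B
          _ ≤ l (x - m) := hB _
      · calc l (x - m) ≤ l (M - m) := hmono (by linarith [hx.2])
          _ ≤ |l (M - m)| := le_abs_self _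
          _ ≤ _ := le_max_right _ _
  set f : ℝ → ℝ := fun m => (∫ x, l (x - m) ∂μ) + m with hf
  -- convexity of f
  have hfconv : ConvexOn ℝ Set.univ f := by
    constructor
    · exact convex_univ
    · intro m₁ _ m₂ _ a b ha hb hab
      have key : ∀ᵐ x ∂μ, l (x - (a • m₁ + b • m₂)) ≤ a * l (x - m₁) + b * l (x - m₂) := by
        filter_upwards with x
        have : x - (a • m₁ + b • m₂) = a • (x - m₁) + b • (x - m₂) := by
          simp only [smul_eq_mul]; linear_combination (-x) * hab
        rw [this]
        exact hconv.2 (mem_univ _) (mem_univ _) ha hb hab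
      have hintegral : (∫ x, l (x - (a • m₁ + b • m₂)) ∂μ)
          ≤ ∫ x, (a * l (x - m₁) + b * l (x - m₂)) ∂μ := by
        refine integral_mono_ae (hint _) ?_ key
        exact ((hint m₁).const_mul a).add ((hint m₂).const_mul b)
      rw [integral_add ((hint m₁).const_mul a) ((hint m₂).const_mul b),
        integral_const_mul, integral_const_mul] at hintegral
      simp only [smul_eq_mul] at hintegral ⊢
      simp only [hf]
      linarith [hintegral]
  have hfcont : Continuous f := hfconv.locallyLipschitz.continuous
  -- slope bound: ε
  set R' : ℝ := max R 1 with hR'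
  have hR'pos : (0:ℝ) < R' := lt_of_lt_of_le one_pos (le_max_right _ _)
  have hcpos : 0 < l R' - R' := by
    have := hR R' (by rw [abs_of_pos hR'pos]; exact le_max_left _ _)
    linarith
  set ε : ℝ := (l R' - R') / R' with hε
  have hεpos : 0 < ε := div_pos hcpos hR'pos
  -- linear growth: l x ≥ (1+ε) x for x ≥ R'
  have hlin : ∀ x : ℝ, R' ≤ x → (1 + ε) * x ≤ l x := by
    intro x hx
    have hxpos : 0 < x := lt_of_lt_of_le hR'pos hx
    have ht0 : 0 ≤ R' / x := le_of_lt (div_pos hR'pos hxpos)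
    have ht1 : 0 ≤ 1 - R' / x := by
      have := (div_le_one hxpos).2 hx; linarith
    have hcomb := hconv.2 (mem_univ x) (mem_univ (0:ℝ)) ht0 ht1 (by ring)
    simp only [smul_eq_mul, mul_zero, add_zero, h0] at hcomb
    have hxx : R' / x * x = R' := div_mul_cancel₀ _ (ne_of_gt hxpos)
    rw [hxx] at hcomb
    have h2 : x * l R' ≤ x * (R' / x * l x) := mul_le_mul_of_nonneg_left hcomb hxpos.le
    have h3 : x * (R' / x * l x) = R' * l x := by field_simp
    have h4 : x * l R' = (1 + ε) * x * R' := by rw [hε]; field_simp; ring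
    rw [h3, h4] at h2
    nlinarith [hR'pos]
  -- lower bound for very negative m
  have hlow : ∀ m : ℝ, m ≤ -M - R' → -(1 + ε) * M - ε * m ≤ f m := by
    intro m hm
    have hpt : ∀ᵐ x ∂μ, -(1 + ε) * M - ε * m - m ≤ l (x - m) := by
      filter_upwards [hae] with x hx
      have hxm : R' ≤ x - m := by linarith [hx.1]
      have := hlin (x - m) hxm
      have hx1 : -M ≤ x := hx.1
      nlinarith [hεpos.le]
    have : -(1 + ε) * M - ε * m - m = ∫ _x, (-(1 + ε) * M - ε * m - m) ∂μ := by
      rw [integral_const]; simp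
    have hle : -(1 + ε) * M - ε * m - m ≤ ∫ x, l (x - m) ∂μ := by
      rw [this]
      exact integral_mono_ae (integrable_const _) (hint m) hpt
    simp only [hf]; linarith
  -- lower bound for positive m
  have hup : ∀ m : ℝ, B + m ≤ f m := by
    intro m
    have : B = ∫ _x, B ∂μ := by rw [integral_const]; simp
    have hle : B ≤ ∫ x, l (x - m) ∂μ := by
      rw [this]; exact integral_mono_ae (integrable_const _) (hint m)
        (Filter.Eventually.of_forall fun x => hB _)
    simp only [hf]; linarith
  -- choose K
  set K : ℝ := max (max (f 0 - B + 1) (M + R')) ((f 0 + (1 + ε) * M) / ε + 1) with hK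
  have hK0 : 0 ≤ K := le_trans (by positivity : (0:ℝ) ≤ M + R') (le_trans (le_max_right _ _) (le_max_left _ _))
  -- minimum over [-K, K]
  obtain ⟨mstar, hmem, hmin⟩ := (isCompact_Icc (a := -K) (b := K)).exists_isMinOn
    (Set.nonempty_Icc.2 (by linarith)) (hfcont.continuousOn)
  refine ⟨mstar, fun m => ?_⟩
  show f mstar ≤ f m
  have hf0 : f mstar ≤ f 0 := hmin (Set.mem_Icc.2 ⟨by linarith, hK0⟩)
  rcases le_or_gt (-K) m with h1 | h1
  · rcases le_or_gt m K with h2 | h2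
    · exact hmin (Set.mem_Icc.2 ⟨h1, h2⟩)
    · -- m > K : use hup
      have hK1 : f 0 - B + 1 ≤ K := le_trans (le_max_left _ _) (le_max_left _ _)
      calc f mstar ≤ f 0 := hf0
        _ ≤ B + m := by linarith
        _ ≤ f m := hup m
  · -- m < -K : use hlow
    have hK2 : M + R' ≤ K := le_trans (le_max_right _ _) (le_max_left _ _)
    have hK3 : (f 0 + (1 + ε) * M) / ε + 1 ≤ K := le_max_right _ _
    have hdiv : (f 0 + (1 + ε) * M) / ε * ε = f 0 + (1 + ε) * M := by
      field_simp
    have hm1 : m ≤ -M - R' := by linarith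
    have := hlow m hm1
    have e1 : ε * ((f 0 + (1 + ε) * M) / ε + 1) ≤ ε * K :=
      mul_le_mul_of_nonneg_left hK3 hεpos.le
    have e2 : ε * ((f 0 + (1 + ε) * M) / ε + 1) = f 0 + (1 + ε) * M + ε := by
      field_simp
    have e3 : ε * m < ε * (-K) := mul_lt_mul_of_pos_left h1 hεpos
    have hKε : f 0 + (1 + ε) * M + ε ≤ ε * K := by rw [← e2]; exact e1
    calc f mstar ≤ f 0 := hf0
      _ ≤ -(1 + ε) * M - ε * m := by linarith [hKε, e3]
      _ ≤ f m := hlow m hm1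
end

section
/- Let α ∈ (0,1), δ > 0, and define for any probability measure μ₀ on ℝ: AV@R_α(μ₀) = inf_m ( (1/α)∫ (x−m)⁺ dμ₀(x) + m ). Then, with cost c(x,y) = |x−y| and penalization φ = ∞·1_{(δ,∞]} (so φ*(λ) = δλ), one has inf_{λ ≥ 0} ( OCE(l^{λc}) + δλ ) = AV@R_α(μ₀) + δ/α where l(x) = x⁺/α; that is, the robust average value-at-risk over the Wasserstein-1 ball of radius δ equals AV@R_α(μ₀) + δ/α. -/
open MeasureTheory Set Filter Topology ENNReal

noncomputable section

def erealToENNReal (a : EReal) : ℝ≥0∞ := if a = ⊤ then ⊤ else ENNReal.ofReal a.toReal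

/-- Extended integral of an `EReal`-valued function. -/
def eint (μ : Measure ℝ) (h : ℝ → EReal) : EReal :=
  ((∫⁻ x, erealToENNReal (h x) ∂μ : ℝ≥0∞) : EReal)
    - ((∫⁻ x, erealToENNReal (-(h x)) ∂μ : ℝ≥0∞) : EReal)

/-- `λc`-transform with translation-invariant cost. -/
def lamTrans (ctil : ℝ → ℝ≥0∞) (lam : ℝ) (g : ℝ → EReal) (x : ℝ) : EReal :=
  ⨆ y : ℝ, (g y - (lam : EReal) * (ctil (y - x) : EReal))

/-- Optimized certainty equivalent of an `EReal`-valued loss. -/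
def OCEe (μ : Measure ℝ) (h : ℝ → EReal) : EReal :=
  ⨅ m : ℝ, (eint μ (fun x => h (x - m)) + (m : EReal))

/-! ### Auxiliary lemmas -/

lemma erealToENNReal_coe' (r : ℝ) : erealToENNReal (r : EReal) = ENNReal.ofReal r := by
  simp [erealToENNReal]

lemma erealToENNReal_neg_coe' (r : ℝ) (hr : 0 ≤ r) : erealToENNReal (-(r : EReal)) = 0 := by
  rw [← EReal.coe_neg, erealToENNReal_coe', ENNReal.ofReal_eq_zero]
  linarith

lemma eint_coe' (μ : Measure ℝ) [IsProbabilityMeasure μ] (f : ℝ → ℝ)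
    (hf : Integrable f μ) (h0 : ∀ x, 0 ≤ f x) :
    eint μ (fun x => ((f x : ℝ) : EReal)) = ((∫ x, f x ∂μ : ℝ) : EReal) := by
  unfold eint
  have h1 : (∫⁻ x, erealToENNReal ((f x : ℝ) : EReal) ∂μ) = ENNReal.ofReal (∫ x, f x ∂μ) := by
    simp_rw [erealToENNReal_coe']
    exact (ofReal_integral_eq_lintegral_ofReal hf (.of_forall h0)).symm
  have h2 : (∫⁻ x, erealToENNReal (-((f x : ℝ) : EReal)) ∂μ) = 0 := by
    simp only [fun x => erealToENNReal_neg_coe' (f x) (h0 x)]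
    simp
  rw [h1, h2, EReal.coe_ennreal_ofReal]
  have : (∫ x, f x ∂μ) ⊔ 0 = ∫ x, f x ∂μ := sup_eq_left.2 (integral_nonneg h0)
  rw [this]
  simp [sub_eq_add_neg]

lemma coe_iInf_of_bddBelow' (g : ℝ → ℝ) (L : ℝ) (hL : ∀ m, L ≤ g m) :
    (⨅ m : ℝ, ((g m : ℝ) : EReal)) = ((⨅ m, g m : ℝ) : EReal) := by
  have hbdd : BddBelow (Set.range g) := ⟨L, by rintro _ ⟨m, rfl⟩; exact hL m⟩
  apply le_antisymm
  · set b : EReal := ⨅ m : ℝ, ((g m : ℝ) : EReal) with hb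
    have hbot : (L : EReal) ≤ b := le_iInf fun m => EReal.coe_le_coe_iff.2 (hL m)
    have htop : b ≤ ((g 0 : ℝ) : EReal) := iInf_le _ 0
    have hbne : b ≠ ⊥ := by
      intro h; rw [h, le_bot_iff] at hbot; exact EReal.coe_ne_bot L hbot
    have htne : b ≠ ⊤ := by
      intro h; rw [h, top_le_iff] at htop; exact EReal.coe_ne_top _ htop
    have hcoe : b = (b.toReal : EReal) := (EReal.coe_toReal htne hbne).symm
    rw [hcoe]
    refine EReal.coe_le_coe_iff.2 (le_ciInf fun m => ?_)
    have h1 : b ≤ ((g m : ℝ) : EReal) := iInf_le _ m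
    rw [hcoe] at h1
    exact EReal.coe_le_coe_iff.1 h1
  · exact le_iInf fun m => EReal.coe_le_coe_iff.2 (ciInf_le hbdd m)

lemma lamTrans_term_eq (α : ℝ) (lam x y : ℝ) :
    ((max y 0 / α : ℝ) : EReal) - (lam : EReal) * ((ENNReal.ofReal |y - x| : ℝ≥0∞) : EReal)
      = ((max y 0 / α - lam * |y - x| : ℝ) : EReal) := by
  rw [EReal.coe_ennreal_ofReal, sup_eq_left.2 (abs_nonneg (y - x)),
    ← EReal.coe_mul, ← EReal.coe_sub]

lemma lamTrans_of_ge' (α : ℝ) (hα0 : 0 < α) (lam : ℝ) (hlam : 1 / α ≤ lam) (x : ℝ) :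
    lamTrans (fun d => ENNReal.ofReal |d|) lam (fun y => ((max y 0 / α : ℝ) : EReal)) x
      = ((max x 0 / α : ℝ) : EReal) := by
  unfold lamTrans
  apply le_antisymm
  · refine iSup_le fun y => ?_
    rw [lamTrans_term_eq]
    refine EReal.coe_le_coe_iff.2 ?_
    have h1 : max y 0 ≤ max x 0 + |y - x| :=
      max_le (by have := le_abs_self (y - x); have := le_max_left x 0; linarith)
        (add_nonneg (le_max_right x 0) (abs_nonneg _))
    have h2 : (1 / α) * |y - x| ≤ lam * |y - x| :=
      mul_le_mul_of_nonneg_right hlam (abs_nonneg _)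
    have h3 : max y 0 / α ≤ (max x 0 + |y - x|) / α := by gcongr
    rw [add_div] at h3
    have h4 : |y - x| / α = (1 / α) * |y - x| := by ring
    rw [h4] at h3
    linarith
  · refine le_iSup_of_le x ?_
    rw [lamTrans_term_eq]
    refine EReal.coe_le_coe_iff.2 ?_
    simp [sub_self]

lemma lamTrans_of_lt' (α : ℝ) (hα0 : 0 < α) (lam : ℝ) (hlam0 : 0 ≤ lam)
    (hlam : lam < 1 / α) (x : ℝ) :
    lamTrans (fun d => ENNReal.ofReal |d|) lam (fun y => ((max y 0 / α : ℝ) : EReal)) x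
      = ⊤ := by
  unfold lamTrans
  rw [EReal.eq_top_iff_forall_lt]
  intro r
  have ht0 : 0 < 1 / α - lam := by linarith
  obtain ⟨y, hy0, hyx, hylarge⟩ : ∃ y : ℝ, 0 ≤ y ∧ x ≤ y ∧ r < y * (1 / α - lam) + lam * x := by
    refine ⟨max (max x 0) ((r - lam * x) / (1 / α - lam) + 1),
      le_trans (le_max_right x 0) (le_max_left _ _),
      le_trans (le_max_left x 0) (le_max_left _ _), ?_⟩
    have h5 : (r - lam * x) / (1 / α - lam)
        < max (max x 0) ((r - lam * x) / (1 / α - lam) + 1) :=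
      lt_of_lt_of_le (by linarith) (le_max_right _ _)
    rw [div_lt_iff₀ ht0] at h5
    linarith
  refine lt_of_lt_of_le ?_ (le_iSup _ y)
  rw [lamTrans_term_eq]
  refine EReal.coe_lt_coe_iff.2 ?_
  rw [max_eq_left hy0, abs_of_nonneg (by linarith : (0:ℝ) ≤ y - x)]
  have h8 : y / α - lam * (y - x) = y * (1 / α - lam) + lam * x := by ring
  rw [h8]; exact hylarge

lemma eint_top' (μ : Measure ℝ) [IsProbabilityMeasure μ] :
    eint μ (fun _ : ℝ => (⊤ : EReal)) = ⊤ := by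
  unfold eint
  have h1 : erealToENNReal ⊤ = ⊤ := by simp [erealToENNReal]
  have h2 : erealToENNReal (⊥ : EReal) = 0 := by
    simp [erealToENNReal]
  simp [h1, h2, sub_eq_add_neg, EReal.neg_top]

/-- with `l(x) = x⁺/α`, cost `c(x,y) = |x−y|` and `φ = ∞·1_{(δ,∞]}` (so
`φ*(λ) = δλ`), the robust average value-at-risk equals `AV@R_α(μ₀) + δ/α`:
`inf_{λ ≥ 0} ( OCE(l^{λc}) + δλ ) = AV@R_α(μ₀) + δ/α`. -/
theorem robust_AVaR_wasserstein1_ball (α δ : ℝ) (hα : α ∈ Set.Ioo (0 : ℝ) 1) (hδ : 0 < δ)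
    (μ₀ : Measure ℝ) [IsProbabilityMeasure μ₀] (hint : Integrable (fun x : ℝ => x) μ₀) :
    (⨅ (lam : ℝ) (_ : 0 ≤ lam),
        (OCEe μ₀ (lamTrans (fun d => ENNReal.ofReal |d|) lam
            (fun x => ((max x 0 / α : ℝ) : EReal)))
          + ((δ * lam : ℝ) : EReal)))
      = (((⨅ m : ℝ, ((1 / α) * ∫ x, max (x - m) 0 ∂μ₀ + m)) + δ / α : ℝ) : EReal) := by
  obtain ⟨hα0, hα1⟩ := hα
  have hintmax : ∀ m : ℝ, Integrable (fun x => max (x - m) 0) μ₀ := fun m =>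
    (hint.sub (integrable_const m)).sup (integrable_const 0)
  have hintf : ∀ m : ℝ, Integrable (fun x => max (x - m) 0 / α) μ₀ := fun m =>
    (hintmax m).div_const α
  -- the real-valued objective
  set g : ℝ → ℝ := fun m => (1 / α) * ∫ x, max (x - m) 0 ∂μ₀ + m with hg
  -- lower bound for g
  have hmono : ∀ m : ℝ, (∫ x, x ∂μ₀) - m ≤ ∫ x, max (x - m) 0 ∂μ₀ := by
    intro m
    have h1 : (∫ x, x - m ∂μ₀) ≤ ∫ x, max (x - m) 0 ∂μ₀ :=
      integral_mono (hint.sub (integrable_const m)) (hintmax m) fun x => le_max_left _ _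
    have h2 : (∫ x, x - m ∂μ₀) = (∫ x, x ∂μ₀) - m := by
      rw [integral_sub hint (integrable_const m), integral_const]
      simp
    linarith
  have hmax0 : ∀ m : ℝ, 0 ≤ ∫ x, max (x - m) 0 ∂μ₀ := fun m =>
    integral_nonneg fun x => le_max_right _ _
  set L : ℝ := min 0 ((1 / α) * ∫ x, x ∂μ₀) with hL
  have hLg : ∀ m : ℝ, L ≤ g m := by
    intro m
    rcases le_or_gt 0 m with hm | hm
    · have : (0:ℝ) ≤ g m := by
        have h0 := hmax0 m
        have h1α : 0 < 1 / α := by positivity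
        simp only [hg]
        nlinarith
      exact le_trans (min_le_left _ _) this
    · have h1 : (1 / α) * ((∫ x, x ∂μ₀) - m) ≤ (1 / α) * ∫ x, max (x - m) 0 ∂μ₀ :=
        mul_le_mul_of_nonneg_left (hmono m) (by positivity)
      have h2 : (1 / α) * (∫ x, x ∂μ₀) ≤ g m := by
        have h1α : 1 < 1 / α := by
          rw [lt_div_iff₀ hα0]; linarith
        simp only [hg]
        nlinarith
      exact le_trans (min_le_right _ _) h2
  -- OCE for lam ≥ 1/α
  have hOCE : ∀ lam : ℝ, 1 / α ≤ lam →
      OCEe μ₀ (lamTrans (fun d => ENNReal.ofReal |d|) lam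
        (fun x => ((max x 0 / α : ℝ) : EReal))) = ((⨅ m : ℝ, g m : ℝ) : EReal) := by
    intro lam hlam
    unfold OCEe
    have hterm : ∀ m : ℝ,
        eint μ₀ (fun x => lamTrans (fun d => ENNReal.ofReal |d|) lam
          (fun y => ((max y 0 / α : ℝ) : EReal)) (x - m)) + (m : EReal)
        = ((g m : ℝ) : EReal) := by
      intro m
      have h1 : (fun x : ℝ => lamTrans (fun d => ENNReal.ofReal |d|) lam
          (fun y => ((max y 0 / α : ℝ) : EReal)) (x - m))
          = fun x : ℝ => ((max (x - m) 0 / α : ℝ) : EReal) := by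
        funext x; exact lamTrans_of_ge' α hα0 lam hlam (x - m)
      rw [h1, eint_coe' μ₀ _ (hintf m) (fun x => by positivity)]
      rw [← EReal.coe_add]
      congr 1
      simp only [hg, integral_div]
      ring
    simp_rw [hterm]
    exact coe_iInf_of_bddBelow' g L hLg
  -- OCE for lam < 1/α
  have hTop : ∀ lam : ℝ, 0 ≤ lam → lam < 1 / α →
      OCEe μ₀ (lamTrans (fun d => ENNReal.ofReal |d|) lam
        (fun x => ((max x 0 / α : ℝ) : EReal))) = ⊤ := by
    intro lam hlam0 hlam
    unfold OCEe
    have h1 : ∀ m : ℝ, (fun x : ℝ => lamTrans (fun d => ENNReal.ofReal |d|) lam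
        (fun y => ((max y 0 / α : ℝ) : EReal)) (x - m)) = fun _ : ℝ => (⊤ : EReal) := by
      intro m; funext x; exact lamTrans_of_lt' α hα0 lam hlam0 hlam (x - m)
    simp_rw [h1, eint_top']
    simp [EReal.top_add_coe]
  apply le_antisymm
  · have h0 : (0:ℝ) ≤ 1 / α := by positivity
    refine iInf_le_of_le (1 / α) (iInf_le_of_le h0 ?_)
    rw [hOCE _ le_rfl, ← EReal.coe_add]
    exact EReal.coe_le_coe_iff.2 (le_of_eq (by rw [mul_one_div]))
  · refine le_iInf fun lam => le_iInf fun hlam => ?_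
    rcases lt_or_ge lam (1 / α) with h | h
    · rw [hTop lam hlam h, EReal.top_add_coe]
      exact le_top
    · rw [hOCE lam h, ← EReal.coe_add]
      refine EReal.coe_le_coe_iff.2 ?_
      have hda : δ / α ≤ δ * lam := by
        rw [div_eq_mul_one_div]
        exact mul_le_mul_of_nonneg_left h hδ.le
      linarith

end
end
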